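/- With f_ε as in the previous construction for a fixed q ∈ [1,∞) (f_ε = n^{−2} e^{n/q} on [1/n − e^{−n}, 1/n + e^{−n}], n ≥ 4, and 0 elsewhere), the squared net (f_ε²)_ε fails the L^q-moderateness condition: for every s ∈ R, ∫₀¹ ε^{qs} |f_ε(0)|^{2q} dε/ε = ∞. Hence the space of L^q-moderate nets is not closed under pointwise multiplication. -/

import Mathlib

/-!
On the spike `[1/n - e^{-n}, 1/n + e^{-n}]` we have `|f|^q = n^{-2q} e^n`, and the spike has
length `2e^{-n}`, so it contributes `2n^{-2q}` to `∫ |f|^q`: a convergent series, which gives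
moderateness with `s = 1/q`. For the square, `|f|^{2q} = n^{-4q} e^{2n}` and `ε ≥ n^{-2}` on the
spike, so its contribution is at least `e^n` divided by a power of `n` depending on `s`, which is
unbounded in `n`.
-/

open MeasureTheory Set Real Filter Topology
open scoped ENNReal

section PiecewiseConstant

variable {α ι : Type*} [MeasurableSpace α] [Countable ι] {s : ι → Set α}

theorem measurable_of_eq_const_on_pieces {β : Type*} [MeasurableSpace β]
    (hs : ∀ i, MeasurableSet (s i)) {f : α → β} {c : ι → β} {b : β}
    (hf_on : ∀ i, ∀ x ∈ s i, f x = c i) (hf_off : ∀ x, (∀ i, x ∉ s i) → f x = b) :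
    Measurable f := by
  intro B hB
  have hpiece : ∀ i, s i ∩ f ⁻¹' B = s i ∩ (fun _ => c i) ⁻¹' B := fun i => by
    ext x
    simp +contextual [hf_on i x]
  have hrest : (⋃ i, s i)ᶜ ∩ f ⁻¹' B = (⋃ i, s i)ᶜ ∩ (fun _ => b) ⁻¹' B := by
    ext x
    simp +contextual [hf_off x]
  have hsplit : f ⁻¹' B = (⋃ i, s i ∩ f ⁻¹' B) ∪ ((⋃ i, s i)ᶜ ∩ f ⁻¹' B) := by
    rw [← iUnion_inter, ← union_inter_distrib_right, union_compl_self, univ_inter]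
  rw [hsplit, hrest]
  refine .union (.iUnion fun i => ?_)
    ((MeasurableSet.iUnion hs).compl.inter (measurable_const hB))
  rw [hpiece]
  exact (hs i).inter (measurable_const hB)

theorem lintegral_le_tsum_of_le_on_pieces {μ : Measure α} (hs : ∀ i, MeasurableSet (s i))
    {g : α → ℝ≥0∞} {c : ι → ℝ≥0∞} (hg_on : ∀ i, ∀ x ∈ s i, g x ≤ c i)
    (hg_off : ∀ x, (∀ i, x ∉ s i) → g x = 0) :
    ∫⁻ x, g x ∂μ ≤ ∑' i, c i * μ (s i) := by
  have hsupp : Function.support g ⊆ ⋃ i, s i := fun x hx => by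
    by_contra hx'
    exact hx (hg_off x fun i hi => hx' (mem_iUnion_of_mem i hi))
  calc ∫⁻ x, g x ∂μ = ∫⁻ x in ⋃ i, s i, g x ∂μ := (setLIntegral_eq_of_support_subset hsupp).symm
    _ ≤ ∑' i, ∫⁻ x in s i, g x ∂μ := lintegral_iUnion_le s g
    _ ≤ ∑' i, ∫⁻ _ in s i, c i ∂μ :=
        ENNReal.tsum_le_tsum fun i => setLIntegral_mono' (hs i) (hg_on i)
    _ = ∑' i, c i * μ (s i) := by simp only [setLIntegral_const]

end PiecewiseConstant

theorem exp_neg_le_inv_two_mul {x : ℝ} (hx : 0 < x) : exp (-x) ≤ (2 * x)⁻¹ := by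
  rw [exp_neg]
  exact inv_anti₀ (by positivity) two_mul_le_exp

theorem inv_sq_rpow {x : ℝ} (hx : 0 ≤ x) (t : ℝ) : ((x ^ 2)⁻¹) ^ t = x ^ (-(2 * t)) := by
  rw [inv_rpow (by positivity), ← rpow_natCast_mul hx, rpow_neg hx, Nat.cast_ofNat]

theorem abs_inv_sq_mul_exp_rpow {x : ℝ} (hx : 0 ≤ x) (u t : ℝ) :
    |(x ^ 2)⁻¹ * exp u| ^ t = x ^ (-(2 * t)) * exp (u * t) := by
  rw [abs_of_nonneg (by positivity), mul_rpow (by positivity) (exp_pos u).le, inv_sq_rpow hx,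
    ← exp_mul]

theorem rpow_max_zero_le_rpow {a x : ℝ} (ha : 0 < a) (hax : a ≤ x) (hx : x ≤ 1) (t : ℝ) :
    a ^ max t 0 ≤ x ^ t :=
  (rpow_le_rpow ha.le hax (le_max_right t 0)).trans
    (rpow_le_rpow_of_exponent_ge (ha.trans_le hax) hx (le_max_left t 0))

namespace SpikeNet

def spike (n : ℕ) : Set ℝ := Icc ((n : ℝ)⁻¹ - exp (-(n : ℝ))) ((n : ℝ)⁻¹ + exp (-(n : ℝ)))

theorem volume_spike (n : ℕ) : volume (spike n) = ENNReal.ofReal (2 * exp (-(n : ℝ))) := by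
  rw [spike, Real.volume_Icc]
  ring_nf

theorem spike_subset_Icc {n : ℕ} (hn : 4 ≤ n) : spike n ⊆ Icc (((n : ℝ) ^ 2)⁻¹) 1 := by
  have hn' : (4 : ℝ) ≤ n := by exact_mod_cast hn
  have hy : 0 < (n : ℝ)⁻¹ := by positivity
  have hy4 : (n : ℝ)⁻¹ ≤ 4⁻¹ := inv_anti₀ (by norm_num) hn'
  have he : exp (-(n : ℝ)) ≤ (n : ℝ)⁻¹ / 2 := by
    simpa [mul_inv, div_eq_mul_inv, mul_comm] using
      exp_neg_le_inv_two_mul (by positivity : (0 : ℝ) < n)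
  rintro ε ⟨hlo, hhi⟩
  rw [mem_Icc, ← inv_pow, sq]
  constructor <;> nlinarith

theorem spike_subset_Ioc {n : ℕ} (hn : 4 ≤ n) : spike n ⊆ Ioc 0 1 := fun _ hε =>
  have hpos : (0 : ℝ) < ((n : ℝ) ^ 2)⁻¹ := by
    have : (0 : ℝ) < n := by exact_mod_cast (by omega : 0 < n)
    positivity
  have h := spike_subset_Icc hn hε
  ⟨hpos.trans_le h.1, h.2⟩

theorem lintegral_abs_rpow_lt_top {q : ℝ} (hq : 1 ≤ q) {f : ℝ → ℝ}
    (hf_on : ∀ n : ℕ, 4 ≤ n → ∀ ε ∈ spike n, f ε = ((n : ℝ) ^ 2)⁻¹ * exp (n / q))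
    (hf_off : ∀ ε, (∀ n : ℕ, 4 ≤ n → ε ∉ spike n) → f ε = 0) :
    ∫⁻ ε, ‖|f ε| ^ q‖ₑ < ⊤ := by
  have hq0 : 0 < q := by linarith
  have hsum : Summable fun n : {n : ℕ // 4 ≤ n} => 2 * (n : ℝ) ^ (-(2 * q)) :=
    ((summable_nat_rpow.2 (by linarith)).mul_left 2).subtype _
  calc ∫⁻ ε, ‖|f ε| ^ q‖ₑ
      ≤ ∑' n : {n : ℕ // 4 ≤ n},
          ENNReal.ofReal (|((n : ℝ) ^ 2)⁻¹ * exp (n / q)| ^ q) * volume (spike n) :=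
        lintegral_le_tsum_of_le_on_pieces (s := fun n : {n : ℕ // 4 ≤ n} => spike n)
          (fun _ => measurableSet_Icc)
          (fun n ε hε => by
            rw [hf_on n n.2 ε hε, enorm_eq_ofReal_abs, abs_of_nonneg (by positivity)])
          (fun ε h => by
            rw [hf_off ε fun n hn => h ⟨n, hn⟩, abs_zero, zero_rpow hq0.ne', enorm_zero])
    _ = ∑' n : {n : ℕ // 4 ≤ n}, ENNReal.ofReal (2 * (n : ℝ) ^ (-(2 * q))) := by
        congr 1 with n
        rw [volume_spike, ← ENNReal.ofReal_mul (by positivity),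
          abs_inv_sq_mul_exp_rpow (by positivity), div_mul_cancel₀ _ hq0.ne']
        rw [exp_neg]
        field_simp
    _ = ENNReal.ofReal (∑' n : {n : ℕ // 4 ≤ n}, 2 * (n : ℝ) ^ (-(2 * q))) :=
        (ENNReal.ofReal_tsum_of_nonneg (fun _ => by positivity) hsum).symm
    _ < ⊤ := ENNReal.ofReal_lt_top

theorem exp_div_rpow_le_setLIntegral_spike {q : ℝ} (hq : 0 < q) (s : ℝ) {f : ℝ → ℝ} {m : ℕ}
    (hm : 4 ≤ m) (hf : ∀ ε ∈ spike m, f ε = ((m : ℝ) ^ 2)⁻¹ * exp (m / q)) :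
    ENNReal.ofReal (exp m / (m : ℝ) ^ (2 * max (q * s - 1) 0 + 4 * q)) ≤
      ∫⁻ ε in spike m, ‖ε ^ (q * s) * |f ε| ^ (2 * q) / ε‖ₑ := by
  set r := 2 * max (q * s - 1) 0 + 4 * q
  have hm0 : (0 : ℝ) < m := by exact_mod_cast (by omega : 0 < m)
  have hpt : ∀ ε ∈ spike m,
      exp (2 * m) * (m : ℝ) ^ (-r) ≤ ε ^ (q * s) * |f ε| ^ (2 * q) / ε := by
    intro ε hε
    obtain ⟨hlo, hhi⟩ := spike_subset_Icc hm hε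
    have hε0 : 0 < ε := (by positivity : (0 : ℝ) < ((m : ℝ) ^ 2)⁻¹).trans_le hlo
    have hpow := rpow_max_zero_le_rpow (by positivity) hlo hhi (q * s - 1)
    rw [inv_sq_rpow hm0.le] at hpow
    calc exp (2 * m) * (m : ℝ) ^ (-r)
        = (m : ℝ) ^ (-(2 * max (q * s - 1) 0)) *
            ((m : ℝ) ^ (-(2 * (2 * q))) * exp (m / q * (2 * q))) := by
          rw [show (m / q * (2 * q) : ℝ) = 2 * m by field_simp, ← mul_assoc, ← rpow_add hm0,
            mul_comm]
          congr 2
          ring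
      _ ≤ ε ^ (q * s - 1) * ((m : ℝ) ^ (-(2 * (2 * q))) * exp (m / q * (2 * q))) :=
          mul_le_mul_of_nonneg_right hpow (by positivity)
      _ = ε ^ (q * s) * |f ε| ^ (2 * q) / ε := by
          rw [hf ε hε, abs_inv_sq_mul_exp_rpow hm0.le, rpow_sub_one hε0.ne']
          ring
  calc ENNReal.ofReal (exp m / (m : ℝ) ^ r)
      ≤ ENNReal.ofReal (exp (2 * m) * (m : ℝ) ^ (-r)) * volume (spike m) := by
        rw [volume_spike, ← ENNReal.ofReal_mul (by positivity)]
        apply ENNReal.ofReal_le_ofReal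
        have hP : 0 < (m : ℝ) ^ r := rpow_pos_of_pos hm0 r
        rw [rpow_neg hm0.le, two_mul (m : ℝ), exp_add, exp_neg]
        field_simp
        linarith [exp_pos (m : ℝ)]
    _ = ∫⁻ _ in spike m, ENNReal.ofReal (exp (2 * m) * (m : ℝ) ^ (-r)) :=
        (setLIntegral_const _ _).symm
    _ ≤ ∫⁻ ε in spike m, ‖ε ^ (q * s) * |f ε| ^ (2 * q) / ε‖ₑ :=
        setLIntegral_mono' measurableSet_Icc fun ε hε => by
          rw [enorm_eq_ofReal_abs]
          exact ENNReal.ofReal_le_ofReal ((hpt ε hε).trans (le_abs_self _))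

end SpikeNet

open SpikeNet

/-- For the net `f_ε = n^{−2} e^{n/q}` on
`[1/n − e^{−n}, 1/n + e^{−n}]` (`n ≥ 4`) and `0` elsewhere: `(f_ε)` is
`L^q`-moderate, but its square fails `L^q`-moderateness: for every `s ∈ ℝ`,
`∫₀¹ ε^{qs} |f_ε|^{2q} dε/ε = ∞`. Hence `L^q`-moderate nets are not closed
under pointwise multiplication. -/
theorem moderate_nets_not_closed_under_multiplication
    (q : ℝ) (hq : 1 ≤ q)
    (f : ℝ → ℝ)
    (hf_on : ∀ n : ℕ, 4 ≤ n →
      ∀ ε ∈ Set.Icc ((n : ℝ)⁻¹ - Real.exp (-(n : ℝ))) ((n : ℝ)⁻¹ + Real.exp (-(n : ℝ))),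
        f ε = ((n : ℝ) ^ 2)⁻¹ * Real.exp ((n : ℝ) / q))
    (hf_off : ∀ ε : ℝ,
      (∀ n : ℕ, 4 ≤ n →
        ε ∉ Set.Icc ((n : ℝ)⁻¹ - Real.exp (-(n : ℝ))) ((n : ℝ)⁻¹ + Real.exp (-(n : ℝ)))) →
      f ε = 0) :
    (∃ s : ℝ,
      IntegrableOn (fun ε : ℝ => ε ^ (q * s) * |f ε| ^ q / ε) (Set.Ioc (0 : ℝ) 1)) ∧
    (∀ s : ℝ,
      ¬ IntegrableOn (fun ε : ℝ => ε ^ (q * s) * |f ε| ^ (2 * q) / ε)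
        (Set.Ioc (0 : ℝ) 1)) := by
  have hq0 : 0 < q := by linarith
  refine ⟨⟨1 / q, ?_⟩, fun s hint => ?_⟩
  · have hf : Measurable f :=
      measurable_of_eq_const_on_pieces (s := fun n : {n : ℕ // 4 ≤ n} => spike n)
        (fun _ => measurableSet_Icc) (fun n => hf_on n n.2)
        fun ε h => hf_off ε fun n hn => h ⟨n, hn⟩
    refine ⟨(by fun_prop : Measurable _).aestronglyMeasurable, ?_⟩
    refine lt_of_le_of_lt ?_ (lintegral_abs_rpow_lt_top hq hf_on hf_off)
    refine (setLIntegral_le_lintegral _ _).trans (lintegral_mono fun ε => ?_)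
    simp only [mul_one_div_cancel hq0.ne', rpow_one]
    rcases eq_or_ne ε 0 with rfl | hε
    · simp
    · rw [mul_div_cancel_left₀ _ hε]
  · set r := 2 * max (q * s - 1) 0 + 4 * q
    have hlow : ∀ m : ℕ, 4 ≤ m → ENNReal.ofReal (exp m / (m : ℝ) ^ r) ≤
        ∫⁻ ε in Ioc 0 1, ‖ε ^ (q * s) * |f ε| ^ (2 * q) / ε‖ₑ := fun m hm =>
      (exp_div_rpow_le_setLIntegral_spike hq0 s hm (hf_on m hm)).trans
        (lintegral_mono_set (spike_subset_Ioc hm))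
    have htend : Tendsto (fun m : ℕ => ENNReal.ofReal (exp m / (m : ℝ) ^ r)) atTop (𝓝 ⊤) :=
      ENNReal.tendsto_ofReal_atTop.comp
        ((tendsto_exp_div_rpow_atTop r).comp tendsto_natCast_atTop_atTop)
    exact hint.2.ne (top_le_iff.1 (le_of_tendsto htend (eventually_atTop.2 ⟨4, hlow⟩)))
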